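/- Reduction of the majority-optimality condition to a λ-inequality: fix an integer n ≥ 1 and λ > 0. For μ, p_0, p_1 ∈ [0,1] with μ·p_1 + (1−μ)·p_0 > 0, set p = μp_1/(μp_1 + (1−μ)p_0), q_0 = (1−p_0)·ψ_λ(0) + p_0·ψ_λ(p), and q_1 = (1−p_1)·ψ_λ(1) + p_1·ψ_λ(p). Then the following two conditions are equivalent: (A) for all μ, p_0, p_1 ∈ [0,1], μ·(q_1(1−q_1))^{⌊(n−1)/2⌋}(1−2q_1) ≤ (1−μ)·(q_0(1−q_0))^{⌊(n−1)/2⌋}(1−2q_0); (B) for all q_0, q_1 with ψ_λ(0) < q_0 ≤ q_1 ≤ 1/2, (q_1(1−q_1))^{⌊(n−1)/2⌋}(1−2q_1)/(ψ_λ(1) − q_1) ≤ (q_0(1−q_0))^{⌊(n−1)/2⌋}(1−2q_0)/(ψ_λ(1) − q_0) · (2λ + ln(1−q_0) − ln q_0)/(2λ − ln(1−q_0) + ln q_0). -/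

import Mathlib

/-!
Write `s = ψ_λ(p)` for the posterior `p`, `F(q) = (q(1-q))^m (1-2q)` and
`oddsRatio λ p = (s - ψ_λ(0)) / (ψ_λ(1) - s) · (1-p)/p`. Since `q₀ - ψ_λ(0) = p₀ (s - ψ_λ(0))`,
`ψ_λ(1) - q₁ = p₁ (ψ_λ(1) - s)` and, by Bayes' rule, `μ p₁ (1-p) = (1-μ) p₀ p`, condition (A) at
`(μ, p₀, p₁)` is equivalent to `(q₀ - ψ_λ(0)) F(q₁) / (ψ_λ(1) - q₁) ≤ oddsRatio λ p · F(q₀)`.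
Condition (B) at `(q₀, q₁)` is the same inequality with `ψ_λ(p) = q₀`, because then its
logarithmic factor equals `(1-p)/p`; it is the case `p₀ = 1` of (A).

The identity `(ψ_λ(p) - ψ_λ(0)) sinh(2λ(1-p)) = (ψ_λ(1) - ψ_λ(p)) sinh(2λp)` gives
`oddsRatio λ p = g(2λp) / g(2λ(1-p))` with `g(x) = sinh x / x` increasing on `x > 0` (convexity of
`sinh`), so `oddsRatio λ` is increasing. As `q₀ ≤ s`, (B) therefore implies (A) whenever
`q₁ ≤ 1/2`. If `1/2 ≤ q₀` the symmetry `(μ, p₀, p₁) ↦ (1-μ, p₁, p₀)`, `q ↦ 1 - q` reduces to that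
case, and if `q₀ ≤ 1/2 < q₁` then (A) holds because `F(q₁) ≤ 0 ≤ F(q₀)`.
-/

open Real

/-- Quantal response function `ψ_λ(p) = 1/(1 + exp(2λ(1−2p)))`. -/
noncomputable def psi (lam p : ℝ) : ℝ := 1 / (1 + Real.exp (2 * lam * (1 - 2 * p)))

/-- `p = μp₁/(μp₁ + (1−μ)p₀)`. -/
noncomputable def pPost (μ p0 p1 : ℝ) : ℝ := μ * p1 / (μ * p1 + (1 - μ) * p0)

/-- `q₀ = (1−p₀)·ψ_λ(0) + p₀·ψ_λ(p)`. -/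
noncomputable def q0Of (lam μ p0 p1 : ℝ) : ℝ :=
  (1 - p0) * psi lam 0 + p0 * psi lam (pPost μ p0 p1)

/-- `q₁ = (1−p₁)·ψ_λ(1) + p₁·ψ_λ(p)`. -/
noncomputable def q1Of (lam μ p0 p1 : ℝ) : ℝ :=
  (1 - p1) * psi lam 1 + p1 * psi lam (pPost μ p0 p1)

lemma psi_pos (lam p : ℝ) : 0 < psi lam p := by
  unfold psi; positivity

lemma psi_one_sub (lam p : ℝ) : psi lam (1 - p) = 1 - psi lam p := by
  unfold psi
  rw [show 2 * lam * (1 - 2 * (1 - p)) = -(2 * lam * (1 - 2 * p)) by ring, Real.exp_neg]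
  have := Real.exp_pos (2 * lam * (1 - 2 * p))
  field_simp
  ring

lemma psi_lt_one (lam p : ℝ) : psi lam p < 1 := by
  have h := psi_one_sub lam (1 - p)
  rw [sub_sub_cancel] at h
  linarith [psi_pos lam (1 - p)]

lemma psi_one (lam : ℝ) : psi lam 1 = 1 - psi lam 0 := by
  rw [← psi_one_sub, sub_zero]

lemma psi_strictMono {lam : ℝ} (hlam : 0 < lam) : StrictMono (psi lam) := by
  intro p p' h
  unfold psi
  gcongr

lemma psi_half (lam : ℝ) : psi lam (1 / 2) = 1 / 2 := by
  norm_num [psi]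

lemma half_lt_psi_one {lam : ℝ} (hlam : 0 < lam) : 1 / 2 < psi lam 1 :=
  psi_half lam ▸ psi_strictMono hlam (by norm_num)

lemma log_one_sub_psi_sub_log_psi (lam p : ℝ) :
    Real.log (1 - psi lam p) - Real.log (psi lam p) = 2 * lam * (1 - 2 * p) := by
  have hψ := psi_pos lam p
  have hψ1 : 1 - psi lam p ≠ 0 := by
    rw [← psi_one_sub]; exact (psi_pos _ _).ne'
  rw [← Real.log_div hψ1 hψ.ne', ← Real.log_exp (2 * lam * (1 - 2 * p))]
  congr 1
  unfold psi
  field_simp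
  ring

lemma exists_psi_eq {lam x : ℝ} (hlam : lam ≠ 0) (hx0 : 0 < x) (hx1 : x < 1) :
    ∃ p, psi lam p = x := by
  refine ⟨(2 * lam - (Real.log (1 - x) - Real.log x)) / (4 * lam), ?_⟩
  unfold psi
  rw [show 2 * lam * (1 - 2 * ((2 * lam - (Real.log (1 - x) - Real.log x)) / (4 * lam)))
      = Real.log (1 - x) - Real.log x by field_simp; ring,
    Real.exp_sub, Real.exp_log (by linarith), Real.exp_log hx0]
  field_simp
  ring

lemma log_ratio_psi_eq {lam : ℝ} (hlam : lam ≠ 0) (p : ℝ) :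
    (2 * lam + Real.log (1 - psi lam p) - Real.log (psi lam p)) /
        (2 * lam - Real.log (1 - psi lam p) + Real.log (psi lam p)) = (1 - p) / p := by
  have h := log_one_sub_psi_sub_log_psi lam p
  rw [show 2 * lam + Real.log (1 - psi lam p) - Real.log (psi lam p) = 4 * lam * (1 - p) by
      linear_combination h,
    show 2 * lam - Real.log (1 - psi lam p) + Real.log (psi lam p) = 4 * lam * p by
      linear_combination -h]
  exact mul_div_mul_left _ _ (by positivity)

lemma psi_sub_psi_zero_mul_sinh (lam p : ℝ) :
    (psi lam p - psi lam 0) * Real.sinh (2 * lam * (1 - p)) =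
      (psi lam 1 - psi lam p) * Real.sinh (2 * lam * p) := by
  set X := Real.exp (2 * lam * p) with hX
  set Y := Real.exp (2 * lam * (1 - p)) with hY
  have hXpos : 0 < X := Real.exp_pos _
  have hYpos : 0 < Y := Real.exp_pos _
  have hp : psi lam p = X / (X + Y) := by
    rw [psi, show 2 * lam * (1 - 2 * p) = 2 * lam * (1 - p) - 2 * lam * p by ring,
      Real.exp_sub, ← hX, ← hY]
    field_simp
  have h0 : psi lam 0 = 1 / (1 + X * Y) := by
    rw [psi, show 2 * lam * (1 - 2 * 0) = 2 * lam * p + 2 * lam * (1 - p) by ring,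
      Real.exp_add]
  have h1 : psi lam 1 = X * Y / (1 + X * Y) := by
    rw [psi, show 2 * lam * (1 - 2 * 1) = -(2 * lam * p + 2 * lam * (1 - p)) by ring,
      Real.exp_neg, Real.exp_add, ← hX, ← hY]
    field_simp
    ring
  rw [hp, h0, h1, Real.sinh_eq, Real.sinh_eq, Real.exp_neg, Real.exp_neg, ← hX, ← hY]
  field_simp
  ring

lemma convexOn_sinh : ConvexOn ℝ (Set.Ici 0) Real.sinh := by
  refine convexOn_of_hasDerivWithinAt2_nonneg (convex_Ici 0)
    Real.continuous_sinh.continuousOn (f' := Real.cosh) (f'' := Real.sinh)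
    (fun x _ => (Real.hasDerivAt_sinh x).hasDerivWithinAt)
    (fun x _ => (Real.hasDerivAt_cosh x).hasDerivWithinAt) ?_
  intro x hx
  rw [interior_Ici] at hx
  exact Real.sinh_nonneg_iff.2 (le_of_lt hx)

lemma monotoneOn_sinh_div_self : MonotoneOn (fun x => Real.sinh x / x) (Set.Ioi 0) := by
  intro x hx y hy hxy
  have h := convexOn_sinh.secant_mono Set.self_mem_Ici (Set.Ioi_subset_Ici_self hx)
    (Set.Ioi_subset_Ici_self hy) (ne_of_gt hx) (ne_of_gt hy) hxy
  simpa only [Real.sinh_zero, sub_zero] using h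

noncomputable def oddsRatio (lam p : ℝ) : ℝ :=
  (psi lam p - psi lam 0) / (psi lam 1 - psi lam p) * ((1 - p) / p)

lemma oddsRatio_eq_sinh_div {lam p : ℝ} (hlam : 0 < lam) (hp0 : 0 < p) (hp1 : p < 1) :
    oddsRatio lam p = Real.sinh (2 * lam * p) / (2 * lam * p) /
      (Real.sinh (2 * lam * (1 - p)) / (2 * lam * (1 - p))) := by
  have hψ : psi lam 1 - psi lam p ≠ 0 := (sub_pos.2 (psi_strictMono hlam hp1)).ne'
  have hsinh : Real.sinh (2 * lam * (1 - p)) ≠ 0 :=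
    (Real.sinh_pos_iff.2 (by nlinarith)).ne'
  have hratio : (psi lam p - psi lam 0) / (psi lam 1 - psi lam p) =
      Real.sinh (2 * lam * p) / Real.sinh (2 * lam * (1 - p)) := by
    rw [div_eq_div_iff hψ hsinh, psi_sub_psi_zero_mul_sinh, mul_comm]
  have : 1 - p ≠ 0 := by linarith
  rw [oddsRatio, hratio]
  field_simp

lemma monotoneOn_oddsRatio {lam : ℝ} (hlam : 0 < lam) :
    MonotoneOn (oddsRatio lam) (Set.Ioo 0 1) := by
  rintro p ⟨hp0, hp1⟩ q ⟨hq0, hq1⟩ hpq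
  rw [oddsRatio_eq_sinh_div hlam hp0 hp1, oddsRatio_eq_sinh_div hlam hq0 hq1]
  have sinh_div_pos : ∀ x : ℝ, 0 < x → 0 < Real.sinh x / x :=
    fun x hx => div_pos (Real.sinh_pos_iff.2 hx) hx
  apply div_le_div₀ (sinh_div_pos _ (by positivity)).le
  · exact monotoneOn_sinh_div_self (Set.mem_Ioi.2 (by positivity))
      (Set.mem_Ioi.2 (by positivity)) (by gcongr)
  · exact sinh_div_pos _ (by nlinarith)
  · exact monotoneOn_sinh_div_self (Set.mem_Ioi.2 (by nlinarith))
      (Set.mem_Ioi.2 (by nlinarith)) (by gcongr)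

lemma pPost_bayes {μ p0 p1 : ℝ} (hD : μ * p1 + (1 - μ) * p0 ≠ 0) :
    μ * p1 * (1 - pPost μ p0 p1) = (1 - μ) * p0 * pPost μ p0 p1 := by
  unfold pPost
  field_simp
  ring

lemma pPost_mem_Icc {μ p0 p1 : ℝ} (hμ : μ ∈ Set.Icc (0 : ℝ) 1) (hp0 : p0 ∈ Set.Icc (0 : ℝ) 1)
    (hp1 : p1 ∈ Set.Icc (0 : ℝ) 1) (hD : 0 < μ * p1 + (1 - μ) * p0) :
    pPost μ p0 p1 ∈ Set.Icc 0 1 := by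
  have h1μ : 0 ≤ 1 - μ := sub_nonneg.2 hμ.2
  refine ⟨div_nonneg (mul_nonneg hμ.1 hp1.1) hD.le, (div_le_one hD).2 ?_⟩
  nlinarith [mul_nonneg h1μ hp0.1]

lemma pPost_one_sub {μ p0 p1 : ℝ} (hD : μ * p1 + (1 - μ) * p0 ≠ 0) :
    pPost (1 - μ) p1 p0 = 1 - pPost μ p0 p1 := by
  unfold pPost
  rw [show (1 - μ) * p0 + (1 - (1 - μ)) * p1 = μ * p1 + (1 - μ) * p0 by ring]
  field_simp
  ring

lemma q0Of_sub_psi_zero (lam μ p0 p1 : ℝ) :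
    q0Of lam μ p0 p1 - psi lam 0 = p0 * (psi lam (pPost μ p0 p1) - psi lam 0) := by
  unfold q0Of; ring

lemma psi_pPost_sub_q0Of (lam μ p0 p1 : ℝ) :
    psi lam (pPost μ p0 p1) - q0Of lam μ p0 p1 =
      (1 - p0) * (psi lam (pPost μ p0 p1) - psi lam 0) := by
  unfold q0Of; ring

lemma q1Of_sub_psi_pPost (lam μ p0 p1 : ℝ) :
    q1Of lam μ p0 p1 - psi lam (pPost μ p0 p1) =
      (1 - p1) * (psi lam 1 - psi lam (pPost μ p0 p1)) := by
  unfold q1Of; ring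

lemma psi_one_sub_q1Of (lam μ p0 p1 : ℝ) :
    psi lam 1 - q1Of lam μ p0 p1 = p1 * (psi lam 1 - psi lam (pPost μ p0 p1)) := by
  unfold q1Of; ring

lemma q0Of_one_sub {lam μ p0 p1 : ℝ} (hD : μ * p1 + (1 - μ) * p0 ≠ 0) :
    q0Of lam (1 - μ) p1 p0 = 1 - q1Of lam μ p0 p1 := by
  rw [q0Of, q1Of, pPost_one_sub hD, psi_one_sub, psi_one]
  ring

lemma q1Of_one_sub {lam μ p0 p1 : ℝ} (hD : μ * p1 + (1 - μ) * p0 ≠ 0) :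
    q1Of lam (1 - μ) p1 p0 = 1 - q0Of lam μ p0 p1 := by
  rw [q0Of, q1Of, pPost_one_sub hD, psi_one_sub, psi_one]
  ring

lemma q0Of_mem_Ioo (lam μ p1 : ℝ) {p0 : ℝ} (hp0 : p0 ∈ Set.Icc (0 : ℝ) 1) :
    q0Of lam μ p0 p1 ∈ Set.Ioo 0 1 := by
  have h := convex_Ioo (0 : ℝ) 1 ⟨psi_pos lam 0, psi_lt_one lam 0⟩
    ⟨psi_pos lam (pPost μ p0 p1), psi_lt_one lam (pPost μ p0 p1)⟩
    (sub_nonneg.2 hp0.2) hp0.1 (sub_add_cancel 1 p0)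
  rw [q0Of]
  simpa only [smul_eq_mul] using h

lemma q1Of_mem_Ioo (lam μ p0 : ℝ) {p1 : ℝ} (hp1 : p1 ∈ Set.Icc (0 : ℝ) 1) :
    q1Of lam μ p0 p1 ∈ Set.Ioo 0 1 := by
  have h := convex_Ioo (0 : ℝ) 1 ⟨psi_pos lam 1, psi_lt_one lam 1⟩
    ⟨psi_pos lam (pPost μ p0 p1), psi_lt_one lam (pPost μ p0 p1)⟩
    (sub_nonneg.2 hp1.2) hp1.1 (sub_add_cancel 1 p1)
  rw [q1Of]
  simpa only [smul_eq_mul] using h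

lemma mul_oddsRatio_pPost {lam μ p0 p1 : ℝ} (hlam : 0 < lam)
    (hD : μ * p1 + (1 - μ) * p0 ≠ 0) (hp0 : 0 < pPost μ p0 p1) (hp1 : pPost μ p0 p1 < 1) :
    μ * ((psi lam 1 - q1Of lam μ p0 p1) * oddsRatio lam (pPost μ p0 p1)) =
      (1 - μ) * (q0Of lam μ p0 p1 - psi lam 0) := by
  have hψ : psi lam 1 - psi lam (pPost μ p0 p1) ≠ 0 :=
    (sub_pos.2 (psi_strictMono hlam hp1)).ne'
  rw [psi_one_sub_q1Of, q0Of_sub_psi_zero, oddsRatio]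
  field_simp
  linear_combination (psi lam (pPost μ p0 p1) - psi lam 0) * pPost_bayes hD

lemma mul_le_one_sub_mul_iff {μ c d r x y : ℝ} (hμ : 0 < μ) (hc : 0 < c) (hd : 0 < d)
    (h : μ * (c * r) = (1 - μ) * d) : μ * x ≤ (1 - μ) * y ↔ d * (x / c) ≤ r * y :=
  calc μ * x ≤ (1 - μ) * y ↔ μ * x * d ≤ (1 - μ) * y * d :=
        (mul_le_mul_iff_of_pos_right hd).symm
    _ ↔ μ * (d * x) ≤ μ * (r * y * c) := by
        rw [mul_assoc μ x d, mul_comm x d,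
          show (1 - μ) * y * d = μ * (r * y * c) by linear_combination -y * h]
    _ ↔ d * x ≤ r * y * c := mul_le_mul_iff_right₀ hμ
    _ ↔ d * (x / c) ≤ r * y := by rw [mul_div_assoc', div_le_iff₀ hc]

lemma majorityTerm_nonneg {q : ℝ} (m : ℕ) (hq0 : 0 ≤ q) (hq1 : q ≤ 1 / 2) :
    0 ≤ (q * (1 - q)) ^ m * (1 - 2 * q) :=
  mul_nonneg (pow_nonneg (mul_nonneg hq0 (by linarith)) m) (by linarith)

lemma majorityTerm_nonpos {q : ℝ} (m : ℕ) (hq0 : 1 / 2 ≤ q) (hq1 : q ≤ 1) :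
    (q * (1 - q)) ^ m * (1 - 2 * q) ≤ 0 :=
  mul_nonpos_of_nonneg_of_nonpos (pow_nonneg (mul_nonneg (by linarith) (by linarith)) m)
    (by linarith)

section Conditions

variable (lam : ℝ) (m : ℕ)

def MajorityOptimalAt (μ p0 p1 : ℝ) : Prop :=
  μ * (q1Of lam μ p0 p1 * (1 - q1Of lam μ p0 p1)) ^ m * (1 - 2 * q1Of lam μ p0 p1) ≤
    (1 - μ) * (q0Of lam μ p0 p1 * (1 - q0Of lam μ p0 p1)) ^ m * (1 - 2 * q0Of lam μ p0 p1)

def LambdaInequalityAt (q0 q1 : ℝ) : Prop :=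
  (q1 * (1 - q1)) ^ m * (1 - 2 * q1) / (psi lam 1 - q1) ≤
    (q0 * (1 - q0)) ^ m * (1 - 2 * q0) / (psi lam 1 - q0) *
      ((2 * lam + Real.log (1 - q0) - Real.log q0) /
        (2 * lam - Real.log (1 - q0) + Real.log q0))

def ReducedInequality (p q0 q1 : ℝ) : Prop :=
  (q0 - psi lam 0) * ((q1 * (1 - q1)) ^ m * (1 - 2 * q1) / (psi lam 1 - q1)) ≤
    oddsRatio lam p * ((q0 * (1 - q0)) ^ m * (1 - 2 * q0))

end Conditions

section

variable {lam : ℝ} {m : ℕ}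

lemma q0Of_le_psi_pPost_le_q1Of {μ p0 p1 : ℝ} (hlam : 0 < lam) (hμ : μ ∈ Set.Icc (0 : ℝ) 1)
    (hp0 : p0 ∈ Set.Icc (0 : ℝ) 1) (hp1 : p1 ∈ Set.Icc (0 : ℝ) 1)
    (hD : 0 < μ * p1 + (1 - μ) * p0) :
    q0Of lam μ p0 p1 ≤ psi lam (pPost μ p0 p1) ∧ psi lam (pPost μ p0 p1) ≤ q1Of lam μ p0 p1 := by
  have hpost := pPost_mem_Icc hμ hp0 hp1 hD
  have hψ0 := (psi_strictMono hlam).monotone hpost.1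
  have hψ1 := (psi_strictMono hlam).monotone hpost.2
  constructor
  · rw [← sub_nonneg, psi_pPost_sub_q0Of]
    exact mul_nonneg (sub_nonneg.2 hp0.2) (sub_nonneg.2 hψ0)
  · rw [← sub_nonneg, q1Of_sub_psi_pPost]
    exact mul_nonneg (sub_nonneg.2 hp1.2) (sub_nonneg.2 hψ1)

lemma pPost_mem_Ioo_of_q1Of_lt {μ p0 p1 : ℝ} (hlam : 0 < lam) (hμ : 0 < μ) (hμ1 : μ ≤ 1)
    (hp1 : 0 ≤ p1) (hD : 0 < μ * p1 + (1 - μ) * p0) (hq1 : q1Of lam μ p0 p1 < psi lam 1) :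
    pPost μ p0 p1 ∈ Set.Ioo 0 1 ∧ psi lam 0 < q0Of lam μ p0 p1 := by
  rw [← sub_pos, psi_one_sub_q1Of] at hq1
  have hψ := pos_of_mul_pos_right hq1 hp1
  have hp1' := pos_of_mul_pos_left hq1 hψ.le
  have hP0 : 0 < pPost μ p0 p1 := div_pos (mul_pos hμ hp1') hD
  have hP1 : pPost μ p0 p1 < 1 := (psi_strictMono hlam).lt_iff_lt.1 (sub_pos.1 hψ)
  have hp0' : 0 < p0 := by
    have h : 0 < (1 - μ) * p0 * pPost μ p0 p1 :=
      pPost_bayes hD.ne' ▸ mul_pos (mul_pos hμ hp1') (sub_pos.2 hP1)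
    exact pos_of_mul_pos_right (pos_of_mul_pos_left h hP0.le) (sub_nonneg.2 hμ1)
  refine ⟨⟨hP0, hP1⟩, ?_⟩
  rw [← sub_pos, q0Of_sub_psi_zero]
  exact mul_pos hp0' (sub_pos.2 (psi_strictMono hlam hP0))

lemma majorityOptimalAt_iff_reducedInequality {μ p0 p1 : ℝ} (hlam : 0 < lam)
    (hD : μ * p1 + (1 - μ) * p0 ≠ 0) (hμ : 0 < μ) (hp0 : 0 < pPost μ p0 p1)
    (hp1 : pPost μ p0 p1 < 1) (hq0 : psi lam 0 < q0Of lam μ p0 p1)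
    (hq1 : q1Of lam μ p0 p1 < psi lam 1) :
    MajorityOptimalAt lam m μ p0 p1 ↔
      ReducedInequality lam m (pPost μ p0 p1) (q0Of lam μ p0 p1) (q1Of lam μ p0 p1) := by
  rw [MajorityOptimalAt, mul_assoc μ, mul_assoc (1 - μ)]
  exact mul_le_one_sub_mul_iff hμ (sub_pos.2 hq1) (sub_pos.2 hq0)
    (mul_oddsRatio_pPost hlam hD hp0 hp1)

lemma lambdaInequalityAt_psi_iff {p q1 : ℝ} (hlam : 0 < lam) (hp : 0 < p) :
    LambdaInequalityAt lam m (psi lam p) q1 ↔ ReducedInequality lam m p (psi lam p) q1 := by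
  have hd : 0 < psi lam p - psi lam 0 := sub_pos.2 (psi_strictMono hlam hp)
  rw [LambdaInequalityAt, ReducedInequality, log_ratio_psi_eq hlam.ne',
    ← mul_le_mul_iff_right₀ hd]
  apply iff_of_eq
  congr 1
  rw [oddsRatio]
  ring

lemma ReducedInequality.mono {p p' q0 q1 : ℝ} (hlam : 0 < lam)
    (h : ReducedInequality lam m p q0 q1) (hp : 0 < p) (hpp' : p ≤ p') (hp' : p' < 1)
    (hF : 0 ≤ (q0 * (1 - q0)) ^ m * (1 - 2 * q0)) : ReducedInequality lam m p' q0 q1 :=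
  h.trans <| mul_le_mul_of_nonneg_right
    (monotoneOn_oddsRatio hlam ⟨hp, hpp'.trans_lt hp'⟩ ⟨hp.trans_le hpp', hp'⟩ hpp') hF

lemma majorityOptimalAt_one_sub_iff {μ p0 p1 : ℝ} (hD : μ * p1 + (1 - μ) * p0 ≠ 0) :
    MajorityOptimalAt lam m (1 - μ) p1 p0 ↔ MajorityOptimalAt lam m μ p0 p1 := by
  have hsymm : ∀ q : ℝ, (1 - q) * (1 - (1 - q)) = q * (1 - q) := fun q => by ring
  rw [MajorityOptimalAt, MajorityOptimalAt, q0Of_one_sub hD, q1Of_one_sub hD, hsymm, hsymm,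
    sub_sub_cancel]
  constructor <;> intro h <;> linarith

lemma majorityOptimalAt_of_q1Of_le_half {μ p0 p1 : ℝ} (hlam : 0 < lam)
    (hB : ∀ q0 q1 : ℝ, psi lam 0 < q0 → q0 ≤ q1 → q1 ≤ 1 / 2 → LambdaInequalityAt lam m q0 q1)
    (hμ : μ ∈ Set.Icc (0 : ℝ) 1) (hp0 : p0 ∈ Set.Icc (0 : ℝ) 1) (hp1 : p1 ∈ Set.Icc (0 : ℝ) 1)
    (hD : 0 < μ * p1 + (1 - μ) * p0) (hq1 : q1Of lam μ p0 p1 ≤ 1 / 2) :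
    MajorityOptimalAt lam m μ p0 p1 := by
  obtain ⟨hq0s, hsq1⟩ := q0Of_le_psi_pPost_le_q1Of hlam hμ hp0 hp1 hD
  have hF0 := majorityTerm_nonneg m (q0Of_mem_Ioo lam μ p1 hp0).1.le (by linarith)
  rcases hμ.1.eq_or_lt with rfl | hμ0
  · simpa [MajorityOptimalAt] using hF0
  have hq1ψ := hq1.trans_lt (half_lt_psi_one hlam)
  obtain ⟨⟨hP0, hP1⟩, hq0⟩ := pPost_mem_Ioo_of_q1Of_lt hlam hμ0 hμ.2 hp1.1 hD hq1ψ
  obtain ⟨p', hp'⟩ :=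
    exists_psi_eq hlam.ne' ((psi_pos lam 0).trans hq0) (q0Of_mem_Ioo lam μ p1 hp0).2
  have hp'0 : 0 < p' := (psi_strictMono hlam).lt_iff_lt.1 (hp' ▸ hq0)
  have hp'P : p' ≤ pPost μ p0 p1 := (psi_strictMono hlam).le_iff_le.1 (hp' ▸ hq0s)
  rw [majorityOptimalAt_iff_reducedInequality hlam hD.ne' hμ0 hP0 hP1 hq0 hq1ψ]
  refine ReducedInequality.mono hlam ?_ hp'0 hp'P hP1 hF0
  rw [← hp', ← lambdaInequalityAt_psi_iff hlam hp'0, hp']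
  exact hB _ _ hq0 (hq0s.trans hsq1) hq1

lemma majorityOptimalAt_of_lambdaInequality {μ p0 p1 : ℝ} (hlam : 0 < lam)
    (hB : ∀ q0 q1 : ℝ, psi lam 0 < q0 → q0 ≤ q1 → q1 ≤ 1 / 2 → LambdaInequalityAt lam m q0 q1)
    (hμ : μ ∈ Set.Icc (0 : ℝ) 1) (hp0 : p0 ∈ Set.Icc (0 : ℝ) 1) (hp1 : p1 ∈ Set.Icc (0 : ℝ) 1)
    (hD : 0 < μ * p1 + (1 - μ) * p0) : MajorityOptimalAt lam m μ p0 p1 := by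
  rcases le_or_gt (q1Of lam μ p0 p1) (1 / 2) with hq1 | hq1
  · exact majorityOptimalAt_of_q1Of_le_half hlam hB hμ hp0 hp1 hD hq1
  rcases le_or_gt (q0Of lam μ p0 p1) (1 / 2) with hq0 | hq0
  · rw [MajorityOptimalAt, mul_assoc μ, mul_assoc (1 - μ)]
    exact (mul_nonpos_of_nonneg_of_nonpos hμ.1
        (majorityTerm_nonpos m hq1.le (q1Of_mem_Ioo lam μ p0 hp1).2.le)).trans
      (mul_nonneg (sub_nonneg.2 hμ.2) (majorityTerm_nonneg m (q0Of_mem_Ioo lam μ p1 hp0).1.le hq0))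
  · rw [← majorityOptimalAt_one_sub_iff hD.ne']
    refine majorityOptimalAt_of_q1Of_le_half hlam hB ⟨sub_nonneg.2 hμ.2, by linarith [hμ.1]⟩
      hp1 hp0 (by linarith) ?_
    rw [q1Of_one_sub hD.ne']
    linarith

lemma exists_q0Of_eq_psi_q1Of_eq {p q1 : ℝ} (hlam : 0 < lam) (hp : 0 < p) (hpq : psi lam p ≤ q1)
    (hq1 : q1 < psi lam 1) :
    ∃ μ p1 : ℝ, μ ∈ Set.Ioo 0 1 ∧ p1 ∈ Set.Ioc 0 1 ∧ pPost μ 1 p1 = p ∧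
      q0Of lam μ 1 p1 = psi lam p ∧ q1Of lam μ 1 p1 = q1 := by
  have hψ : 0 < psi lam 1 - psi lam p := by linarith
  have hp1 : p < 1 := (psi_strictMono hlam).lt_iff_lt.1 (hpq.trans_lt hq1)
  set r := (psi lam 1 - q1) / (psi lam 1 - psi lam p)
  have hr0 : 0 < r := div_pos (by linarith) hψ
  have hE : 0 < p + r * (1 - p) := by nlinarith
  have hpost : pPost (p / (p + r * (1 - p))) 1 r = p := by
    unfold pPost
    field_simp
    rw [div_eq_one_iff_eq (by nlinarith)]
    ring
  refine ⟨p / (p + r * (1 - p)), r, ⟨by positivity, ?_⟩, ⟨hr0, ?_⟩, hpost, ?_, ?_⟩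
  · rw [div_lt_one hE]; nlinarith
  · rw [div_le_one hψ]; linarith
  · rw [q0Of, hpost]; ring
  · have hr' : r * (psi lam 1 - psi lam p) = psi lam 1 - q1 := div_mul_cancel₀ _ hψ.ne'
    rw [q1Of, hpost]
    linear_combination -hr'

lemma lambdaInequalityAt_of_majorityOptimal (hlam : 0 < lam)
    (hA : ∀ μ p0 p1 : ℝ, μ ∈ Set.Icc (0 : ℝ) 1 → p0 ∈ Set.Icc (0 : ℝ) 1 →
      p1 ∈ Set.Icc (0 : ℝ) 1 → 0 < μ * p1 + (1 - μ) * p0 → MajorityOptimalAt lam m μ p0 p1)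
    {q0 q1 : ℝ} (hq0 : psi lam 0 < q0) (hq01 : q0 ≤ q1) (hq1 : q1 ≤ 1 / 2) :
    LambdaInequalityAt lam m q0 q1 := by
  have hq1ψ : q1 < psi lam 1 := hq1.trans_lt (half_lt_psi_one hlam)
  obtain ⟨p, rfl⟩ := exists_psi_eq hlam.ne' ((psi_pos lam 0).trans hq0) (by linarith)
  have hp0 : 0 < p := (psi_strictMono hlam).lt_iff_lt.1 hq0
  have hp1 : p < 1 := (psi_strictMono hlam).lt_iff_lt.1 (hq01.trans_lt hq1ψ)
  obtain ⟨μ, r, hμ, hr, hpost, hq0', hq1'⟩ := exists_q0Of_eq_psi_q1Of_eq hlam hp0 hq01 hq1ψ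
  have hD : 0 < μ * r + (1 - μ) * 1 := by nlinarith [hμ.1, hμ.2, hr.1]
  have h := hA μ 1 r (Set.Ioo_subset_Icc_self hμ) ⟨zero_le_one, le_rfl⟩
    (Set.Ioc_subset_Icc_self hr) hD
  rw [majorityOptimalAt_iff_reducedInequality hlam hD.ne' hμ.1 (hpost ▸ hp0) (hpost ▸ hp1)
    (hq0' ▸ hq0) (hq1' ▸ hq1ψ), hpost, hq0', hq1'] at h
  exact (lambdaInequalityAt_psi_iff hlam hp0).2 h

end

theorem reduction_to_lambda_inequality_general (n : ℕ) (lam : ℝ) (hlam : 0 < lam) :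
    (∀ μ p0 p1 : ℝ, μ ∈ Set.Icc (0 : ℝ) 1 → p0 ∈ Set.Icc (0 : ℝ) 1 →
        p1 ∈ Set.Icc (0 : ℝ) 1 → 0 < μ * p1 + (1 - μ) * p0 →
        μ * (q1Of lam μ p0 p1 * (1 - q1Of lam μ p0 p1)) ^ ((n - 1) / 2) *
            (1 - 2 * q1Of lam μ p0 p1) ≤
          (1 - μ) * (q0Of lam μ p0 p1 * (1 - q0Of lam μ p0 p1)) ^ ((n - 1) / 2) *
            (1 - 2 * q0Of lam μ p0 p1)) ↔
      (∀ q0 q1 : ℝ, psi lam 0 < q0 → q0 ≤ q1 → q1 ≤ 1 / 2 →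
        (q1 * (1 - q1)) ^ ((n - 1) / 2) * (1 - 2 * q1) / (psi lam 1 - q1) ≤
          (q0 * (1 - q0)) ^ ((n - 1) / 2) * (1 - 2 * q0) / (psi lam 1 - q0) *
            ((2 * lam + Real.log (1 - q0) - Real.log q0) /
              (2 * lam - Real.log (1 - q0) + Real.log q0))) :=
  ⟨fun hA _ _ hq0 hq01 hq1 => lambdaInequalityAt_of_majorityOptimal hlam hA hq0 hq01 hq1,
    fun hB _ _ _ hμ hp0 hp1 hD => majorityOptimalAt_of_lambdaInequality hlam hB hμ hp0 hp1 hD⟩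

/-- **Reduction of the majority-optimality condition to a λ-inequality.** For `n ≥ 1` and
`λ > 0`, condition (A) — for all `μ, p₀, p₁ ∈ [0,1]` (with `μp₁ + (1−μ)p₀ > 0`),
`μ·(q₁(1−q₁))^⌊(n−1)/2⌋(1−2q₁) ≤ (1−μ)·(q₀(1−q₀))^⌊(n−1)/2⌋(1−2q₀)` — is equivalent to
condition (B) — for all `ψ_λ(0) < q₀ ≤ q₁ ≤ 1/2`,
`(q₁(1−q₁))^⌊(n−1)/2⌋(1−2q₁)/(ψ_λ(1)−q₁) ≤ (q₀(1−q₀))^⌊(n−1)/2⌋(1−2q₀)/(ψ_λ(1)−q₀) ·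
(2λ + ln(1−q₀) − ln q₀)/(2λ − ln(1−q₀) + ln q₀)`. -/
theorem reduction_to_lambda_inequality (n : ℕ) (hn : 1 ≤ n) (lam : ℝ) (hlam : 0 < lam) :
    (∀ μ p0 p1 : ℝ, μ ∈ Set.Icc (0 : ℝ) 1 → p0 ∈ Set.Icc (0 : ℝ) 1 →
        p1 ∈ Set.Icc (0 : ℝ) 1 → 0 < μ * p1 + (1 - μ) * p0 →
        μ * (q1Of lam μ p0 p1 * (1 - q1Of lam μ p0 p1)) ^ ((n - 1) / 2) *
            (1 - 2 * q1Of lam μ p0 p1) ≤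
          (1 - μ) * (q0Of lam μ p0 p1 * (1 - q0Of lam μ p0 p1)) ^ ((n - 1) / 2) *
            (1 - 2 * q0Of lam μ p0 p1)) ↔
      (∀ q0 q1 : ℝ, psi lam 0 < q0 → q0 ≤ q1 → q1 ≤ 1 / 2 →
        (q1 * (1 - q1)) ^ ((n - 1) / 2) * (1 - 2 * q1) / (psi lam 1 - q1) ≤
          (q0 * (1 - q0)) ^ ((n - 1) / 2) * (1 - 2 * q0) / (psi lam 1 - q0) *
            ((2 * lam + Real.log (1 - q0) - Real.log q0) /
              (2 * lam - Real.log (1 - q0) + Real.log q0))) :=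
  reduction_to_lambda_inequality_general n lam hlam
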